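/- Let η = (1 + i·√3)/2 ∈ ℂ, and define f₁(z₁,z₂,z₃,z₄) = z₄(1 − z₃) − z₃·z₂·(1 − z₄)(1 − z₁), f₂(z₁,z₂,z₃,z₄) = z₄(1 − z₃) − z₁(1 − z₂), f₃(z₁,z₂,z₃,z₄) = 1 − z₁(1 − z₃). Then the set of t ∈ ℂ for which there exist u, v ∈ ℂ with f₁(η, t, u, v) = 0, f₂(η, t, u, v) = 0, and f₃(η, t, u, v) = 0 is finite. -/

import Mathlib

/-- First edge equation of the triangulation of the Berge manifold. -/
noncomputable def bergeF₁ (z₁ z₂ z₃ z₄ : ℂ) : ℂ :=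
  z₄ * (1 - z₃) - z₃ * z₂ * (1 - z₄) * (1 - z₁)

/-- Second edge equation of the triangulation of the Berge manifold. -/
noncomputable def bergeF₂ (z₁ z₂ z₃ z₄ : ℂ) : ℂ :=
  z₄ * (1 - z₃) - z₁ * (1 - z₂)

/-- Completeness equation `μ(𝔪) = 1` for the cusp of the Berge manifold corresponding to
the unknotted component. -/
noncomputable def bergeF₃ (z₁ z₂ z₃ z₄ : ℂ) : ℂ :=
  1 - z₁ * (1 - z₃)

/-- The shape parameter of the regular ideal tetrahedron. -/
noncomputable def bergeEta : ℂ := (1 + Complex.I * Real.sqrt 3) / 2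

/-!
Since `η² - η + 1 = 0`, i.e. `η (1 - η) = 1`, the system can be solved step by step: with
`z₁ = η` the cusp equation forces `z₃ = η`, the second edge equation then gives
`z₄ = η² (1 - z₂)`, and the first one becomes the monic quadratic `z₂² - 2η z₂ + η - 1 = 0`,
which has at most two roots.
-/

open Polynomial in
theorem Set.finite_setOf_sq_sub_mul_add_eq_zero {R : Type*} [CommRing R] [IsDomain R]
    (b c : R) : {t : R | t ^ 2 - b * t + c = 0}.Finite := by
  have hp : (X ^ 2 + (C (-b) * X + C c) : R[X]) ≠ 0 :=
    (monic_X_pow_add (degree_linear_lt.trans_eq (by norm_num))).ne_zero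
  convert finite_setOfPred_isRoot hp using 2 with t
  simp [add_assoc, sub_eq_add_neg]

lemma bergeEta_mul_one_sub : bergeEta * (1 - bergeEta) = 1 := by
  have h3 : (Real.sqrt 3 : ℂ) ^ 2 = 3 := by
    rw [← Complex.ofReal_pow, Real.sq_sqrt (by norm_num)]
    norm_num
  unfold bergeEta
  linear_combination -(Complex.I ^ 2 / 4) * h3 - 3 / 4 * Complex.I_sq

lemma sq_sub_two_mul_add_sub_one_eq_zero_of_bergeF_eq_zero {z t u v : ℂ} (hz : z * (1 - z) = 1)
    (h₁ : bergeF₁ z t u v = 0) (h₂ : bergeF₂ z t u v = 0) (h₃ : bergeF₃ z t u v = 0) :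
    t ^ 2 - 2 * z * t + (z - 1) = 0 := by
  unfold bergeF₁ bergeF₂ bergeF₃ at *
  have hu : u = z := by
    have : z * (u - z) = 0 := by linear_combination h₃ + hz
    linear_combination (mul_eq_zero.1 this).resolve_left (left_ne_zero_of_mul_eq_one hz)
  subst u
  have hv : v = z ^ 2 * (1 - t) := by linear_combination z * h₂ - v * hz
  subst v
  have hquad : (z ^ 2 * (1 - t) - z * t * (1 - z ^ 2 * (1 - t))) * (1 - z) = 0 := by
    linear_combination h₁
  linear_combination (mul_eq_zero.1 hquad).resolve_right (right_ne_zero_of_mul_eq_one hz) -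
    ((1 + z) * t ^ 2 - z * t - 1) * hz

/-- On the curve of deformations of the Berge manifold keeping the unknotted cusp
complete, the first shape parameter `z₁` cannot be constantly equal to `η`: the set of
values of `z₂` admitting a solution with `z₁ = η` is finite. -/
theorem berge_z1_not_constant :
    {t : ℂ | ∃ u v : ℂ,
        bergeF₁ bergeEta t u v = 0 ∧
        bergeF₂ bergeEta t u v = 0 ∧
        bergeF₃ bergeEta t u v = 0}.Finite := by
  refine (Set.finite_setOf_sq_sub_mul_add_eq_zero (2 * bergeEta) (bergeEta - 1)).subset ?_
  rintro t ⟨u, v, h₁, h₂, h₃⟩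
  exact sq_sub_two_mul_add_sub_one_eq_zero_of_bergeF_eq_zero bergeEta_mul_one_sub h₁ h₂ h₃
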